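/- With I, K, X as above and M_λ = inf{I(u) : u ∈ X, K(u) = λ}, the scaling identity M_λ = λ^{2/3} M_1 holds for all λ > 0, and consequently the strict subadditivity M_α + M_{λ−α} > M_λ holds for all α ∈ (0, λ), provided M_1 > 0. -/

import Mathlib

/-!
`I` is quadratic and `K` cubic, so `u ↦ t • u` maps the constraint set `{K = λ}` onto
`{K = t³λ}` and multiplies `I` by `t²`; hence `M_{t³λ} = t² M_λ`. Given this scaling, strict
subadditivity of `M` is that of `s ↦ s^{2/3}`, which is strictly concave and vanishes at `0`.
-/

open MeasureTheory Filter Real Topology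

/-- The Fourier transform of a real-valued function on `ℝ`. -/
noncomputable def FT (u : ℝ → ℝ) : ℝ → ℂ :=
  FourierTransform.fourier (fun x : ℝ => (u x : ℂ))

/-- The squared Sobolev norm of order `s`, defined on the Fourier side. -/
noncomputable def sobNormSq (s : ℝ) (u : ℝ → ℝ) : ℝ :=
  ∫ ξ : ℝ, (1 + ξ ^ 2) ^ s * ‖FT u ξ‖ ^ 2

/-- The Sobolev norm of order `s`. -/
noncomputable def sobNorm (s : ℝ) (u : ℝ → ℝ) : ℝ := Real.sqrt (sobNormSq s u)

/-- Membership in the Sobolev space `H^s(ℝ)`. -/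
def MemSob (s : ℝ) (u : ℝ → ℝ) : Prop :=
  MemLp u 2 volume ∧
  Integrable (fun ξ : ℝ => (1 + ξ ^ 2) ^ s * ‖FT u ξ‖ ^ 2)

/-- The squared `L²` norm of the antiderivative `∂ₓ⁻¹u`, computed on the Fourier side. -/
noncomputable def antiNormSq (u : ℝ → ℝ) : ℝ := ∫ ξ : ℝ, ‖FT u ξ‖ ^ 2 / ξ ^ 2

/-- The space `X = {f ∈ H^{1/2}(ℝ) : ∂ₓ⁻¹ f ∈ L²(ℝ)}`. -/
def MemX (u : ℝ → ℝ) : Prop :=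
  MemSob (1/2) u ∧ Integrable (fun ξ : ℝ => ‖FT u ξ‖ ^ 2 / ξ ^ 2)

/-- The functional `I(u,c,γ)`, expressed on the Fourier side via Plancherel. -/
noncomputable def Ifun (c γ : ℝ) (u : ℝ → ℝ) : ℝ :=
  ∫ ξ : ℝ, ((1/2) * |ξ| * ‖FT u ξ‖ ^ 2 + (c/2) * ‖FT u ξ‖ ^ 2 + (γ/2) * ‖FT u ξ‖ ^ 2 / ξ ^ 2)

/-- The constraint functional `K(u) = (1/3)∫ u³`. -/
noncomputable def Kfun (u : ℝ → ℝ) : ℝ := (1/3) * ∫ x : ℝ, u x ^ 3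

/-- The Benjamin–Ono soliton `Q_c`. -/
noncomputable def Q (c : ℝ) (x : ℝ) : ℝ := 4 * c / (1 + c ^ 2 * x ^ 2)

/-- The constrained minimum `M_λ`. -/
noncomputable def Mfun (c γ lam : ℝ) : ℝ :=
  sInf {r : ℝ | ∃ u : ℝ → ℝ, MemX u ∧ Kfun u = lam ∧ r = Ifun c γ u}

open scoped Pointwise

lemma FT_const_mul (t : ℝ) (u : ℝ → ℝ) :
    FT (fun x => t * u x) = (t : ℂ) • FT u := by
  have hcoe : (fun x => ((t * u x : ℝ) : ℂ)) = (t : ℂ) • fun x => (u x : ℂ) := by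
    funext x
    simp
  simp only [FT, hcoe]
  exact VectorFourier.fourierIntegral_const_smul _ _ _ _ _

lemma norm_FT_const_mul_sq (t : ℝ) (u : ℝ → ℝ) (ξ : ℝ) :
    ‖FT (fun x => t * u x) ξ‖ ^ 2 = t ^ 2 * ‖FT u ξ‖ ^ 2 := by
  simp [FT_const_mul, mul_pow]

lemma MemX.const_mul {u : ℝ → ℝ} (hu : MemX u) (t : ℝ) : MemX (fun x => t * u x) := by
  obtain ⟨⟨hL2, hSob⟩, hAnti⟩ := hu
  simp only [MemX, MemSob, norm_FT_const_mul_sq, mul_left_comm _ (t ^ 2), mul_div_assoc]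
  exact ⟨⟨hL2.const_mul t, hSob.const_mul _⟩, hAnti.const_mul _⟩

lemma Kfun_const_mul (t : ℝ) (u : ℝ → ℝ) :
    Kfun (fun x => t * u x) = t ^ 3 * Kfun u := by
  simp only [Kfun, mul_pow, integral_const_mul]
  ring

lemma Ifun_const_mul (c γ t : ℝ) (u : ℝ → ℝ) :
    Ifun c γ (fun x => t * u x) = t ^ 2 * Ifun c γ u := by
  simp only [Ifun, norm_FT_const_mul_sq]
  rw [← integral_const_mul]
  congr 1 with ξ
  ring

def constrainedValues (c γ lam : ℝ) : Set ℝ :=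
  {r : ℝ | ∃ u : ℝ → ℝ, MemX u ∧ Kfun u = lam ∧ r = Ifun c γ u}

lemma constrainedValues_mul_cube (c γ lam : ℝ) {t : ℝ} (ht : t ≠ 0) :
    constrainedValues c γ (t ^ 3 * lam) = t ^ 2 • constrainedValues c γ lam := by
  ext r
  constructor
  · rintro ⟨u, hu, hK, rfl⟩
    refine ⟨Ifun c γ (fun x => t⁻¹ * u x), ⟨_, hu.const_mul t⁻¹, ?_, rfl⟩, ?_⟩
    · rw [Kfun_const_mul, hK]
      field_simp
    · change t ^ 2 * Ifun c γ _ = _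
      rw [Ifun_const_mul]
      field_simp
  · rintro ⟨_, ⟨u, hu, hK, rfl⟩, rfl⟩
    exact ⟨_, hu.const_mul t, by rw [Kfun_const_mul, hK], (Ifun_const_mul c γ t u).symm⟩

lemma Mfun_mul_cube (c γ lam : ℝ) {t : ℝ} (ht : 0 < t) :
    Mfun c γ (t ^ 3 * lam) = t ^ 2 * Mfun c γ lam := by
  change sInf (constrainedValues c γ _) = t ^ 2 * sInf (constrainedValues c γ lam)
  rw [constrainedValues_mul_cube c γ lam ht.ne', Real.sInf_smul_of_nonneg (by positivity),
    smul_eq_mul]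

lemma Mfun_eq_rpow_mul_Mfun_one (c γ : ℝ) {lam : ℝ} (hlam : 0 < lam) :
    Mfun c γ lam = lam ^ ((2 : ℝ) / 3) * Mfun c γ 1 := by
  have hcube : (lam ^ ((1 : ℝ) / 3)) ^ 3 * 1 = lam := by
    rw [mul_one, ← Real.rpow_mul_natCast hlam.le]
    norm_num
  have hsq : (lam ^ ((1 : ℝ) / 3)) ^ 2 = lam ^ ((2 : ℝ) / 3) := by
    rw [← Real.rpow_mul_natCast hlam.le]
    norm_num
  rw [← hsq, ← Mfun_mul_cube c γ 1 (by positivity), hcube]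

lemma StrictConcaveOn.mul_lt_map_mul {f : ℝ → ℝ} (hf : StrictConcaveOn ℝ (Set.Ici 0) f)
    (hf0 : 0 ≤ f 0) {θ s : ℝ} (hθ₀ : 0 < θ) (hθ₁ : θ < 1) (hs : 0 < s) :
    θ * f s < f (θ * s) := by
  have h := hf.2 (Set.mem_Ici.2 hs.le) (Set.mem_Ici.2 le_rfl) hs.ne' hθ₀ (sub_pos.2 hθ₁)
    (add_sub_cancel θ 1)
  simp only [smul_eq_mul, mul_zero, add_zero] at h
  linarith [mul_nonneg (sub_pos.2 hθ₁).le hf0]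

lemma StrictConcaveOn.map_add_lt {f : ℝ → ℝ} (hf : StrictConcaveOn ℝ (Set.Ici 0) f)
    (hf0 : 0 ≤ f 0) {a b : ℝ} (ha : 0 < a) (hb : 0 < b) :
    f (a + b) < f a + f b := by
  have hab : 0 < a + b := add_pos ha hb
  have hθa := hf.mul_lt_map_mul hf0 (div_pos ha hab) ((div_lt_one hab).2 (by linarith)) hab
  have hθb := hf.mul_lt_map_mul hf0 (div_pos hb hab) ((div_lt_one hab).2 (by linarith)) hab
  rw [div_mul_cancel₀ _ hab.ne'] at hθa hθb
  have hsplit : f (a + b) = a / (a + b) * f (a + b) + b / (a + b) * f (a + b) := by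
    rw [← add_mul, ← add_div, div_self hab.ne', one_mul]
  linarith

theorem M_scaling_and_strict_subadditivity_general (c γ : ℝ)
    (lam : ℝ) (hlam : 0 < lam) :
    Mfun c γ lam = lam ^ ((2:ℝ)/3) * Mfun c γ 1 ∧
    (0 < Mfun c γ 1 → ∀ α : ℝ, 0 < α → α < lam →
      Mfun c γ lam < Mfun c γ α + Mfun c γ (lam - α)) := by
  refine ⟨Mfun_eq_rpow_mul_Mfun_one c γ hlam, fun hM α hα hαlam => ?_⟩
  have hrest : 0 < lam - α := sub_pos.2 hαlam
  have hconcave := (Real.strictConcaveOn_rpow (p := 2 / 3) (by norm_num) (by norm_num)).map_add_lt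
    (by simp) hα hrest
  rw [add_sub_cancel] at hconcave
  rw [Mfun_eq_rpow_mul_Mfun_one c γ hlam, Mfun_eq_rpow_mul_Mfun_one c γ hα,
    Mfun_eq_rpow_mul_Mfun_one c γ hrest, ← add_mul]
  exact mul_lt_mul_of_pos_right hconcave hM

/-- scaling identity `M_λ = λ^{2/3}M_1` and strict subadditivity. -/
theorem M_scaling_and_strict_subadditivity (c γ : ℝ) (hc : 0 < c) (hγ : 0 < γ)
    (lam : ℝ) (hlam : 0 < lam) :
    Mfun c γ lam = lam ^ ((2:ℝ)/3) * Mfun c γ 1 ∧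
    (0 < Mfun c γ 1 → ∀ α : ℝ, 0 < α → α < lam →
      Mfun c γ lam < Mfun c γ α + Mfun c γ (lam - α)) :=
  M_scaling_and_strict_subadditivity_general c γ lam hlam
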